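/- Let Q_ℓ be the generalized quaternion group of order ℓ = 2^j ≥ 8 and let Δ(g) = det(I₂ − γ₁(g)) where γ₁ is the standard 2-dimensional fixed point free representation. Define c_i = ℓ^{-1} Σ_{g ∈ Q_ℓ, g ≠ 1} Δ(g)^i. Then c₀ = (ℓ−1)/ℓ, and for every integer i > 0, c_{2i} is an integer and c_{2i−1} is an even integer. -/

import Mathlib

open Complex Matrix

/-- primitive (2n)-th root of unity ζ = e^{2πi/(2n)} = e^{4πi/ℓ} for ℓ = 4n. -/
noncomputable def zeta (n : ℕ) : ℂ := Complex.exp (2 * Real.pi * Complex.I / (2 * n))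

/-- The 2-dimensional representation γ_u of the generalized quaternion group,
with γ_u(ξ) = diag(ζ^u, ζ^{-u}) and γ_u(J) = [[0,(-1)^u],[1,0]];
here `a i` = ξ^i and `xa i` = J ξ^i. -/
noncomputable def gam (n : ℕ) (u : ℤ) : QuaternionGroup n → Matrix (Fin 2) (Fin 2) ℂ
  | .a i => !![zeta n ^ (u * (i.val : ℤ)), 0; 0, zeta n ^ (-(u * (i.val : ℤ)))]
  | .xa i => !![0, (-1 : ℂ) ^ u * zeta n ^ (-(u * (i.val : ℤ))); zeta n ^ (u * (i.val : ℤ)), 0]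

/-- character of γ_u -/
noncomputable def chi (n : ℕ) (u : ℤ) (g : QuaternionGroup n) : ℂ := Matrix.trace (gam n u g)

/-- κ₁ : ξ ↦ -1, J ↦ 1 -/
def kappa1 (n : ℕ) : QuaternionGroup n → ℂ
  | .a i => (-1) ^ i.val
  | .xa i => (-1) ^ i.val

/-- κ₂ : ξ ↦ 1, J ↦ -1 -/
def kappa2 (n : ℕ) : QuaternionGroup n → ℂ
  | .a _ => 1
  | .xa _ => -1

/-- κ₃ : ξ ↦ -1, J ↦ -1 -/
def kappa3 (n : ℕ) : QuaternionGroup n → ℂ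
  | .a i => (-1) ^ i.val
  | .xa i => -(-1) ^ i.val

/-- Θ₁ : value ℓ/4 = n at ±I = ξ^{±n/2}, value -2 at ξ^{2i}J, 0 otherwise. -/
def Theta1 (n : ℕ) : QuaternionGroup n → ℂ
  | .a i => if i = ((n / 2 : ℕ) : ZMod (2 * n)) ∨ i = -((n / 2 : ℕ) : ZMod (2 * n)) then (n : ℂ) else 0
  | .xa i => if Even i.val then -2 else 0

/-- Θ₂ : value ℓ/4 = n at ±I, value -2 at ξ^{2i+1}J, 0 otherwise. -/
def Theta2 (n : ℕ) : QuaternionGroup n → ℂ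
  | .a i => if i = ((n / 2 : ℕ) : ZMod (2 * n)) ∨ i = -((n / 2 : ℕ) : ZMod (2 * n)) then (n : ℂ) else 0
  | .xa i => if Even i.val then 0 else -2

/-- Δ(g) = det(I₂ - γ₁(g)) -/
noncomputable def Del (n : ℕ) (g : QuaternionGroup n) : ℂ := Matrix.det (1 - gam n 1 g)

/-- c_i = ℓ⁻¹ Σ_{g ≠ 1} Δ(g)^i. -/
noncomputable def cc (n : ℕ) [NeZero n] (i : ℕ) : ℂ :=
  (4 * n : ℂ)⁻¹ * ∑ g ∈ Finset.univ.erase (1 : QuaternionGroup n), Del n g ^ i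

/-!
For `g = ξ^i` we have `Δ(g) = (1 - ζ^i)(1 - ζ^{-i}) = -ζ^{-i}(1 - ζ^i)^2`, so expanding `Δ(g)^k`
binomially and summing over `i` with the orthogonality of the `2n`-th roots of unity leaves
`2n · ∑_{t ≡ k (mod 2n)} C(2k, t)`; for `g = Jξ^i`, `Δ(g) = 2`. Folding that sum at its centre
`t = k` gives, for `k ≥ 1`,
`c_k = C(2k, k)/2 + 2^{k-1} + ∑_{t < k, t ≡ k (mod 2n)} C(2k, t)`, a natural number.
For odd `k` every `t` in the last sum is odd, so `C(2k, t)` is even, and `C(2k, k)/2 + 2^{k-1}` is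
even because `4 ∣ C(2k, k)` for odd `k ≥ 3`.
-/

open Finset

theorem ZMod.sum_val_eq_sum_range {M : Type*} [AddCommMonoid M] (N : ℕ) [NeZero N] (f : ℕ → M) :
    ∑ i : ZMod N, f i.val = ∑ t ∈ range N, f t :=
  sum_nbij' (fun i => i.val) (fun t => (t : ZMod N)) (fun i _ => mem_range.mpr i.val_lt)
    (fun _ _ => mem_univ _) (fun i _ => ZMod.natCast_zmod_val i)
    (fun _ ht => ZMod.val_natCast_of_lt (mem_range.mp ht)) (fun _ _ => rfl)

theorem IsPrimitiveRoot.sum_range_zpow_mul {K : Type*} [Field K] {ζ : K} {N : ℕ}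
    (hζ : IsPrimitiveRoot ζ N) (m : ℤ) :
    ∑ i ∈ range N, ζ ^ ((i : ℤ) * m) = if (N : ℤ) ∣ m then (N : K) else 0 := by
  simp_rw [mul_comm _ m, _root_.zpow_mul, zpow_natCast]
  split_ifs with h
  · simp [(hζ.zpow_eq_one_iff_dvd m).mpr h]
  · have hm : ζ ^ m ≠ 1 := mt (hζ.zpow_eq_one_iff_dvd m).mp h
    rw [geom_sum_eq hm, ← zpow_natCast, ← _root_.zpow_mul, mul_comm, _root_.zpow_mul, zpow_natCast,
      hζ.pow_eq_one, _root_.one_zpow, sub_self, zero_div]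

theorem one_sub_mul_one_sub_inv_pow {K : Type*} [Field K] {x : K} (hx : x ≠ 0) (k : ℕ) :
    ((1 - x) * (1 - x⁻¹)) ^ k =
      ∑ t ∈ range (2 * k + 1), (-1) ^ (t + k) * ((2 * k).choose t : K) * x ^ ((t : ℤ) - k) := by
  have h : (1 - x) * (1 - x⁻¹) = -x⁻¹ * (x - 1) ^ 2 := by field_simp; ring
  rw [h, mul_pow, ← pow_mul, sub_pow, mul_sum]
  refine sum_congr rfl fun t _ => ?_
  rw [zpow_sub₀ hx, zpow_natCast, zpow_natCast, neg_pow, inv_pow, pow_add, pow_add, pow_mul]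
  simp only [one_pow, mul_one, neg_one_sq]
  ring

theorem IsPrimitiveRoot.sum_range_one_sub_mul_one_sub_inv_pow {K : Type*} [Field K] {ζ : K}
    {N : ℕ} (hζ : IsPrimitiveRoot ζ N) (k : ℕ) :
    ∑ i ∈ range N, ((1 - ζ ^ i) * (1 - (ζ ^ i)⁻¹)) ^ k =
      N * ∑ t ∈ range (2 * k + 1) with k ≡ t [MOD N], (-1) ^ (t + k) * ((2 * k).choose t : K) := by
  obtain rfl | hN := eq_or_ne N 0
  · simp
  have hζ0 : ζ ≠ 0 := hζ.ne_zero hN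
  calc ∑ i ∈ range N, ((1 - ζ ^ i) * (1 - (ζ ^ i)⁻¹)) ^ k
      = ∑ t ∈ range (2 * k + 1), (-1) ^ (t + k) * ((2 * k).choose t : K) *
          ∑ i ∈ range N, ζ ^ ((i : ℤ) * ((t : ℤ) - k)) := by
        simp_rw [one_sub_mul_one_sub_inv_pow (pow_ne_zero _ hζ0), mul_sum]
        rw [sum_comm]
        refine sum_congr rfl fun t _ => sum_congr rfl fun i _ => ?_
        rw [_root_.zpow_mul, zpow_natCast]
    _ = _ := by
        simp_rw [hζ.sum_range_zpow_mul, ← Nat.modEq_iff_dvd, mul_ite, mul_zero, sum_filter,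
          mul_sum]
        exact sum_congr rfl fun t _ => by split_ifs <;> ring

theorem neg_one_pow_add_of_modEq {R : Type*} [Monoid R] [HasDistribNeg R] {N k t : ℕ}
    (hN : Even N) (h : k ≡ t [MOD N]) : (-1 : R) ^ (t + k) = 1 := by
  have h2 : k % 2 = t % 2 := h.of_dvd (even_iff_two_dvd.mp hN)
  exact Even.neg_one_pow (Nat.even_iff.mpr (by omega))

def congrBinomSum (N k : ℕ) : ℕ := ∑ t ∈ range k with k ≡ t [MOD N], (2 * k).choose t

theorem sum_filter_modEq_choose (N k : ℕ) :
    ∑ t ∈ range (2 * k + 1) with k ≡ t [MOD N], (2 * k).choose t =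
      k.centralBinom + 2 * congrBinomSum N k := by
  set f : ℕ → ℕ := fun t => if k ≡ t [MOD N] then (2 * k).choose t else 0
  have reflect : ∑ s ∈ range k, f (k + 1 + s) = ∑ s ∈ range k, f s := by
    rw [← sum_range_reflect]
    refine sum_congr rfl fun s hs => ?_
    have hs : s < k := mem_range.mp hs
    have hc : k ≡ 2 * k - s [MOD N] ↔ k ≡ s [MOD N] := by
      rw [Nat.modEq_iff_dvd, Nat.modEq_iff_dvd, Nat.cast_sub (by omega), ← dvd_neg]
      push_cast
      ring_nf
    simp only [f, show k + 1 + (k - 1 - s) = 2 * k - s by omega, hc,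
      Nat.choose_symm (show s ≤ 2 * k by omega)]
  rw [congrBinomSum, sum_filter, sum_filter, show 2 * k + 1 = k + 1 + k by ring, sum_range_add,
    sum_range_succ, reflect]
  simp only [f, if_pos (Nat.ModEq.refl k), Nat.centralBinom]
  ring

theorem four_dvd_centralBinom {k : ℕ} (hk : Odd k) (hk1 : k ≠ 1) : 4 ∣ k.centralBinom := by
  obtain ⟨m, rfl⟩ : ∃ m, k = m + 1 := ⟨k - 1, by grind⟩
  obtain ⟨c, hc⟩ := Nat.two_dvd_centralBinom_of_one_le (show 0 < m by omega)
  have h4 : 4 ∣ (m + 1) * (m + 1).centralBinom := by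
    rw [Nat.succ_mul_centralBinom_succ, hc]
    exact ⟨(2 * m + 1) * c, by ring⟩
  have hco : Nat.Coprime 4 (m + 1) := (Nat.coprime_two_left.mpr hk).pow_left 2
  exact hco.dvd_of_dvd_mul_left h4

theorem even_choose_of_even_of_odd {N t : ℕ} (hN : Even N) (ht : Odd t) : Even (N.choose t) := by
  obtain ⟨s, rfl⟩ : ∃ s, t = s + 1 := ⟨t - 1, by grind⟩
  obtain rfl | ⟨M, rfl⟩ : N = 0 ∨ ∃ M, N = M + 1 := by rcases N with _ | M <;> simp
  · simp
  have h2 : 2 ∣ (M + 1).choose (s + 1) * (s + 1) := by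
    rw [← Nat.add_one_mul_choose_eq]; exact (even_iff_two_dvd.mp hN).mul_right _
  exact even_iff_two_dvd.mpr ((Nat.coprime_two_left.mpr ht).dvd_of_dvd_mul_right h2)

theorem even_congrBinomSum {N k : ℕ} (hN : Even N) (hk : Odd k) : Even (congrBinomSum N k) := by
  refine even_sum _ fun t ht => even_choose_of_even_of_odd (even_two_mul k) ?_
  have h2 : k % 2 = t % 2 := (mem_filter.mp ht).2.of_dvd (even_iff_two_dvd.mp hN)
  exact Nat.odd_iff.mpr (by rw [← h2]; exact Nat.odd_iff.mp hk)

theorem even_centralBinom_div_two_add {k : ℕ} (hk : Odd k) :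
    Even (k.centralBinom / 2 + 2 ^ (k - 1)) := by
  obtain rfl | hk1 := eq_or_ne k 1
  · decide
  obtain ⟨c, hc⟩ := four_dvd_centralBinom hk hk1
  obtain ⟨m, rfl⟩ : ∃ m, k = m + 2 := ⟨k - 2, by grind⟩
  rw [hc, show 4 * c / 2 = 2 * c by omega, show m + 2 - 1 = m + 1 by omega, pow_succ]
  exact ⟨c + 2 ^ m, by ring⟩

theorem zeta_isPrimitiveRoot (n : ℕ) [NeZero n] : IsPrimitiveRoot (zeta n) (2 * n) := by
  convert Complex.isPrimitiveRoot_exp (2 * n) (by simp [NeZero.ne n]) using 1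
  rw [zeta]
  push_cast
  ring_nf

theorem del_a (n : ℕ) (i : ZMod (2 * n)) :
    Del n (.a i) = (1 - zeta n ^ i.val) * (1 - (zeta n ^ i.val)⁻¹) := by
  simp [Del, gam, Matrix.det_fin_two]

theorem del_xa (n : ℕ) (i : ZMod (2 * n)) : Del n (.xa i) = 2 := by
  norm_num [Del, gam, Matrix.det_fin_two, zeta]

def QuaternionGroup.sumZModEquiv (n : ℕ) : ZMod (2 * n) ⊕ ZMod (2 * n) ≃ QuaternionGroup n where
  toFun
    | .inl i => .a i
    | .inr i => .xa i
  invFun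
    | .a i => .inl i
    | .xa i => .inr i
  left_inv := by rintro (i | i) <;> rfl
  right_inv := by rintro (i | i) <;> rfl

theorem QuaternionGroup.sum_univ_eq_sum_a_add_sum_xa {M : Type*} [AddCommMonoid M] (n : ℕ)
    [NeZero n] (f : QuaternionGroup n → M) :
    ∑ g, f g = ∑ i, f (.a i) + ∑ i, f (.xa i) := by
  rw [← (sumZModEquiv n).sum_comp, Fintype.sum_sum_type]
  rfl

theorem sum_del_pow (n k : ℕ) [NeZero n] :
    ∑ g, Del n g ^ k =
      (2 * n : ℂ) * (k.centralBinom + 2 * congrBinomSum (2 * n) k) + (2 * n : ℂ) * 2 ^ k := by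
  have sum_a :
      ∑ i, Del n (.a i) ^ k = (2 * n : ℂ) * (k.centralBinom + 2 * congrBinomSum (2 * n) k) := by
    simp_rw [del_a]
    rw [ZMod.sum_val_eq_sum_range (2 * n) fun t => ((1 - zeta n ^ t) * (1 - (zeta n ^ t)⁻¹)) ^ k,
      (zeta_isPrimitiveRoot n).sum_range_one_sub_mul_one_sub_inv_pow,
      sum_congr rfl fun t ht => by
        rw [neg_one_pow_add_of_modEq (even_two_mul n) (mem_filter.mp ht).2, one_mul]]
    exact_mod_cast congrArg (fun m : ℕ => (2 * n : ℂ) * m) (sum_filter_modEq_choose (2 * n) k)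
  have sum_xa : ∑ i, Del n (.xa i) ^ k = (2 * n : ℂ) * 2 ^ k := by
    simp [del_xa]
  rw [QuaternionGroup.sum_univ_eq_sum_a_add_sum_xa, sum_a, sum_xa]

theorem cc_eq (n : ℕ) [NeZero n] {k : ℕ} (hk : 0 < k) :
    cc n k = ((k.centralBinom / 2 + 2 ^ (k - 1) + congrBinomSum (2 * n) k : ℕ) : ℂ) := by
  have del_one : Del n 1 ^ k = 0 := by
    rw [QuaternionGroup.one_def, del_a]
    simp [hk.ne']
  obtain ⟨c, hc⟩ := Nat.two_dvd_centralBinom_of_one_le hk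
  have hn : (n : ℂ) ≠ 0 := Nat.cast_ne_zero.mpr (NeZero.ne n)
  rw [cc, sum_erase univ (f := fun g => Del n g ^ k) del_one, sum_del_pow, hc,
    Nat.mul_div_cancel_left _ two_pos]
  obtain ⟨m, rfl⟩ : ∃ m, k = m + 1 := ⟨k - 1, by omega⟩
  push_cast
  field_simp
  ring

theorem cc_zero (n : ℕ) [NeZero n] : cc n 0 = ((4 * n : ℂ) - 1) / (4 * n) := by
  have hn : (n : ℂ) ≠ 0 := Nat.cast_ne_zero.mpr (NeZero.ne n)
  rw [cc]
  simp only [pow_zero, sum_const, card_erase_of_mem (mem_univ _), card_univ, QuaternionGroup.card,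
    nsmul_eq_mul, Nat.cast_sub (show 1 ≤ 4 * n by have := NeZero.ne n; omega)]
  push_cast
  field_simp

theorem stmt8_general (n : ℕ) [NeZero n] :
    cc n 0 = ((4 * n : ℂ) - 1) / (4 * n) ∧
    ∀ i : ℕ, 0 < i → (∃ m : ℤ, cc n (2 * i) = m) ∧ (∃ m : ℤ, cc n (2 * i - 1) = 2 * m) := by
  refine ⟨cc_zero n, fun i hi => ⟨⟨_, by rw [cc_eq n (by omega)]; rfl⟩, ?_⟩⟩
  have hodd : Odd (2 * i - 1) := ⟨i - 1, by omega⟩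
  obtain ⟨m, hm⟩ :=
    (even_centralBinom_div_two_add hodd).add (even_congrBinomSum (even_two_mul n) hodd)
  exact ⟨m, by rw [cc_eq n (by omega), hm]; push_cast; ring⟩

/-- c₀ = (ℓ-1)/ℓ, and for i > 0, c_{2i} is an integer and c_{2i-1} is an even integer. -/
theorem stmt8 (j n : ℕ) [NeZero n] (hj : 3 ≤ j) (hn : 4 * n = 2 ^ j) :
    cc n 0 = ((4 * n : ℂ) - 1) / (4 * n) ∧
    ∀ i : ℕ, 0 < i → (∃ m : ℤ, cc n (2 * i) = m) ∧ (∃ m : ℤ, cc n (2 * i - 1) = 2 * m) :=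
  stmt8_general n
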